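/- Let γ > 1. The set of π ∈ (0,1] for which all of the following hold: (i) π < γ - 1, (ii) π/(2π+1) < γπ/(1+π) < 1, and (iii) (1+π)·(γπ/(1+π) - π)·(γ/(1+π)²) + 2·(γπ/(1+π))·(1 - γπ/(1+π)) > 0, is exactly the interval (0, min(γ-1, 1/(γ-1), 1)) ∩ (0,1]. -/

import Mathlib

/-! On `(0, 1]` both constraints reduce to `π < γ - 1` and `(γ - 1) π < 1`: the lower bound in (ii)
holds for every `γ > 1`, the upper bound in (ii) is `(γ - 1) π < 1`, and the left side of (iii)
equals `γ π ((1 - (γ - 1) π) + γ (1 - π)) / (1 + π)²`, which is then positive. -/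

lemma div_two_mul_add_one_lt_mul_div_one_add {γ π : ℝ} (hγ : 1 < γ) (hπ : 0 < π) :
    π / (2 * π + 1) < γ * π / (1 + π) := by
  rw [div_lt_div_iff₀ (by positivity) (by positivity)]
  nlinarith [mul_pos hπ hπ, mul_pos (mul_pos hπ hπ) (sub_pos.mpr hγ), mul_pos hπ (sub_pos.mpr hγ)]

lemma mul_div_one_add_lt_one_iff {γ π : ℝ} (hγ : 1 < γ) (hπ : 0 < π) :
    γ * π / (1 + π) < 1 ↔ π < 1 / (γ - 1) := by
  rw [div_lt_one (by positivity), lt_div_iff₀ (sub_pos.mpr hγ)]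
  constructor <;> intro h <;> linarith

lemma compressibility_eq {γ π : ℝ} (hπ : 0 ≤ π) :
    (1 + π) * (γ * π / (1 + π) - π) * (γ / (1 + π) ^ 2)
        + 2 * (γ * π / (1 + π)) * (1 - γ * π / (1 + π))
      = γ * π * ((1 - (γ - 1) * π) + γ * (1 - π)) / (1 + π) ^ 2 := by
  have : 1 + π ≠ 0 := by positivity
  field_simp
  ring

lemma compressibility_pos {γ π : ℝ} (hγ : 1 < γ) (hπ₀ : 0 < π) (hπ₁ : π ≤ 1)
    (hπγ : π < 1 / (γ - 1)) :
    (1 + π) * (γ * π / (1 + π) - π) * (γ / (1 + π) ^ 2)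
        + 2 * (γ * π / (1 + π)) * (1 - γ * π / (1 + π)) > 0 := by
  rw [compressibility_eq hπ₀.le]
  have hlin : 0 < 1 - (γ - 1) * π := by
    rw [lt_div_iff₀ (sub_pos.mpr hγ)] at hπγ
    linarith
  have hγπ : 0 ≤ γ * (1 - π) := by nlinarith
  have : 0 < γ * π := by nlinarith
  positivity

/-- the set of π ∈ (0,1] satisfying the positivity and both relativistic
    compressibility conditions for a CIG equals (0, min(γ-1, 1/(γ-1), 1)) ∩ (0,1]. -/
theorem stmt_19 (γ : ℝ) (hγ : 1 < γ) :
    {π : ℝ | π ∈ Set.Ioc (0 : ℝ) 1 ∧ π < γ - 1 ∧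
        (π / (2 * π + 1) < γ * π / (1 + π) ∧ γ * π / (1 + π) < 1) ∧
        (1 + π) * (γ * π / (1 + π) - π) * (γ / (1 + π) ^ 2)
          + 2 * (γ * π / (1 + π)) * (1 - γ * π / (1 + π)) > 0}
      = Set.Ioo 0 (min (γ - 1) (min (1 / (γ - 1)) 1)) ∩ Set.Ioc (0 : ℝ) 1 := by
  ext π
  simp only [Set.mem_ofPred_eq, Set.mem_inter_iff, Set.mem_Ioo, Set.mem_Ioc, lt_min_iff]
  constructor
  · rintro ⟨⟨hπ₀, hπ₁⟩, hπγ, ⟨-, hsound⟩, -⟩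
    have hπγ' := (mul_div_one_add_lt_one_iff hγ hπ₀).mp hsound
    have hmul : (γ - 1) * π < 1 := by rwa [lt_div_iff₀ (sub_pos.mpr hγ), mul_comm] at hπγ'
    -- `π² < (γ - 1) π < 1`
    have hlt : π < 1 := by nlinarith
    exact ⟨⟨hπ₀, hπγ, hπγ', hlt⟩, hπ₀, hπ₁⟩
  · rintro ⟨⟨hπ₀, hπγ, hπγ', -⟩, -, hπ₁⟩
    exact ⟨⟨hπ₀, hπ₁⟩, hπγ, ⟨div_two_mul_add_one_lt_mul_div_one_add hγ hπ₀,
      (mul_div_one_add_lt_one_iff hγ hπ₀).mpr hπγ'⟩, compressibility_pos hγ hπ₀ hπ₁ hπγ'⟩
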